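/- For each dimension d ≥ 1 there exist constants C(d) < ∞, γ_0 > 0 and δ_0 > 0 with the following property. Let R > 0, τ > 0, δ ∈ (0, δ_0], and let f: B_{2R} → ℂ be measurable with |{(x,y) ∈ B_R × B_R : |f(x) + f(y) − f(x+y)| > τ}| < δ|B_R|^2. Then whenever x_1, x_2, x_3, x_4 ∈ B_{R/8} are each γ_0-rich (for f, τ, R) and satisfy x_1 − x_2 + x_3 − x_4 = 0, one has |f(x_1) − f(x_2) + f(x_3) − f(x_4)| < C(d)τ. -/

import Mathlib

open MeasureTheory Filter Metric Set
noncomputable section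

/-- ℝ^d as Euclidean space. -/
abbrev Ed (d : ℕ) := EuclideanSpace ℝ (Fin d)

/-- x is γ-rich (for f, τ, R): for all y ∈ B_R outside a set of measure γ|B_R|,
|f(x+y) − f(x) − f(y)| ≤ τ. -/
def Rich {d : ℕ} (f : Ed d → ℂ) (τ R γ : ℝ) (x : Ed d) : Prop :=
  (volume {y : Ed d | y ∈ ball 0 R ∧ ¬ (‖f (x + y) - f x - f y‖ ≤ τ)}).toReal ≤
    γ * (volume (ball (0 : Ed d) R)).toReal

/-! Pick `y, z ∈ B_{R/2}`. Since `(x₁ + y) + (x₃ + z) = (x₂ + y) + (x₄ + z)`, the alternating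
sum `f x₁ - f x₂ + f x₃ - f x₄` is a signed sum of six additivity defects of `f`: at `(xᵢ, y)`
for `i = 1, 2`, at `(xᵢ, z)` for `i = 3, 4`, and at the pairs `(x₁ + y, x₃ + z)` and
`(x₂ + y, x₄ + z)`. As `|B_{R/2}| = 2⁻ᵈ |B_R|`, the choice `γ₀ = 2⁻ᵈ/16`, `δ₀ = 4⁻ᵈ/16` makes each
of the six conditions fail on at most `1/16` of `B_{R/2} × B_{R/2}` (the last two because product
Lebesgue measure is translation invariant), so some `(y, z)` bounds all six defects by `τ`, and
the alternating sum by `6τ`. -/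

open scoped ENNReal

theorem ENNReal.le_ofReal_mul_of_toReal_le {a b : ℝ≥0∞} {r : ℝ} (ha : a ≠ ∞)
    (h : a.toReal ≤ r * b.toReal) : a ≤ ENNReal.ofReal r * b :=
  calc a = ENNReal.ofReal a.toReal := (ENNReal.ofReal_toReal ha).symm
    _ ≤ ENNReal.ofReal (r * b.toReal) := ENNReal.ofReal_le_ofReal h
    _ = ENNReal.ofReal r * ENNReal.ofReal b.toReal := ENNReal.ofReal_mul' ENNReal.toReal_nonneg
    _ ≤ ENNReal.ofReal r * b := by gcongr; exact ENNReal.ofReal_toReal_le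

theorem norm_alternating_sum_le_of_defects {G E : Type*} [AddCommGroup G]
    [SeminormedAddCommGroup E] (f : G → E) {x₁ x₂ x₃ x₄ : G} (hx : x₁ - x₂ + x₃ - x₄ = 0)
    (y z : G) {τ : ℝ}
    (h₁ : ‖f (x₁ + y) - f x₁ - f y‖ ≤ τ) (h₂ : ‖f (x₂ + y) - f x₂ - f y‖ ≤ τ)
    (h₃ : ‖f (x₃ + z) - f x₃ - f z‖ ≤ τ) (h₄ : ‖f (x₄ + z) - f x₄ - f z‖ ≤ τ)
    (h₁₃ : ‖f (x₁ + y) + f (x₃ + z) - f (x₁ + y + (x₃ + z))‖ ≤ τ)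
    (h₂₄ : ‖f (x₂ + y) + f (x₄ + z) - f (x₂ + y + (x₄ + z))‖ ≤ τ) :
    ‖f x₁ - f x₂ + f x₃ - f x₄‖ ≤ 6 * τ := by
  have hw : x₂ + y + (x₄ + z) = x₁ + y + (x₃ + z) := by
    rw [← sub_eq_zero, ← neg_eq_zero, ← hx]; abel
  rw [hw] at h₂₄
  set w := x₁ + y + (x₃ + z)
  have key : f x₁ - f x₂ + f x₃ - f x₄ =
      ((f (x₂ + y) - f x₂ - f y) - (f (x₁ + y) - f x₁ - f y)) +
      ((f (x₄ + z) - f x₄ - f z) - (f (x₃ + z) - f x₃ - f z)) +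
      ((f (x₁ + y) + f (x₃ + z) - f w) - (f (x₂ + y) + f (x₄ + z) - f w)) := by
    abel
  rw [key]
  refine norm_add₃_le.trans ?_
  linarith [norm_sub_le (f (x₂ + y) - f x₂ - f y) (f (x₁ + y) - f x₁ - f y),
    norm_sub_le (f (x₄ + z) - f x₄ - f z) (f (x₃ + z) - f x₃ - f z),
    norm_sub_le (f (x₁ + y) + f (x₃ + z) - f w) (f (x₂ + y) + f (x₄ + z) - f w)]

theorem MeasureTheory.Measure.prod_preimage_add_le {G H : Type*} [MeasurableSpace G]
    [AddGroup G] [MeasurableAdd G] [MeasurableSpace H] [AddGroup H] [MeasurableAdd H]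
    (μ : Measure G) (ν : Measure H) [SFinite μ] [SFinite ν] [μ.IsAddLeftInvariant]
    [ν.IsAddLeftInvariant] (g : G × H) (P : Set (G × H)) :
    μ.prod ν ((g + ·) ⁻¹' P) ≤ μ.prod ν P := by
  have hmap : (μ.prod ν).map (g + ·) = μ.prod ν := by
    rw [show (g + ·) = Prod.map (g.1 + ·) (g.2 + ·) from rfl, ← Measure.map_prod_map _ _
      (measurable_const_add _) (measurable_const_add _), map_add_left_eq_self,
      map_add_left_eq_self]
  calc μ.prod ν ((g + ·) ⁻¹' P) ≤ (μ.prod ν).map (g + ·) P :=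
        Measure.le_map_apply
          ((measurable_const_add g.1).prodMap (measurable_const_add g.2)).aemeasurable P
    _ = μ.prod ν P := by rw [hmap]

theorem exists_pair_notMem_of_measure_le {G : Type*} [MeasurableSpace G] [AddGroup G]
    [MeasurableAdd G] {μ : Measure G} [SFinite μ] [μ.IsAddLeftInvariant]
    {U A₁ A₂ A₃ A₄ : Set G} {P : Set (G × G)} {ε : ℝ≥0∞} (hε : 6 * ε < 1)
    (hU₀ : μ U ≠ 0) (hU : μ U ≠ ∞)
    (h₁ : μ A₁ ≤ ε * μ U) (h₂ : μ A₂ ≤ ε * μ U) (h₃ : μ A₃ ≤ ε * μ U) (h₄ : μ A₄ ≤ ε * μ U)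
    (hP : μ.prod μ P ≤ ε * (μ U * μ U)) (x₁ x₂ x₃ x₄ : G) :
    ∃ y ∈ U, ∃ z ∈ U, y ∉ A₁ ∧ y ∉ A₂ ∧ z ∉ A₃ ∧ z ∉ A₄ ∧
      (x₁ + y, x₃ + z) ∉ P ∧ (x₂ + y, x₄ + z) ∉ P := by
  set S := A₁ ×ˢ U ∪ A₂ ×ˢ U ∪ U ×ˢ A₃ ∪ U ×ˢ A₄ ∪
    (fun p => (x₁, x₃) + p) ⁻¹' P ∪ (fun p => (x₂, x₄) + p) ⁻¹' P
  have hS : μ.prod μ S < μ.prod μ (U ×ˢ U) := by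
    rw [Measure.prod_prod]
    calc μ.prod μ S
        ≤ μ A₁ * μ U + μ A₂ * μ U + μ U * μ A₃ + μ U * μ A₄ + μ.prod μ P + μ.prod μ P := by
          grw [measure_union_le, measure_union_le, measure_union_le, measure_union_le,
            measure_union_le, Measure.prod_prod, Measure.prod_prod, Measure.prod_prod,
            Measure.prod_prod, Measure.prod_preimage_add_le, Measure.prod_preimage_add_le]
      _ ≤ 6 * ε * (μ U * μ U) := by
          grw [h₁, h₂, h₃, h₄, hP]
          exact le_of_eq (by ring)
      _ < 1 * (μ U * μ U) := by
          gcongr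
          exact ENNReal.mul_ne_top hU hU
      _ = μ U * μ U := one_mul _
  obtain ⟨⟨y, z⟩, ⟨hy, hz⟩, hyz⟩ := Set.not_subset.1 fun h => (measure_mono h).not_gt hS
  simp only [S, Set.mem_union, Set.mem_prod, Set.mem_preimage, not_or] at hyz
  exact ⟨y, hy, z, hz, fun h => hyz.1.1.1.1.1 ⟨h, hz⟩, fun h => hyz.1.1.1.1.2 ⟨h, hz⟩,
    fun h => hyz.1.1.1.2 ⟨hy, h⟩, fun h => hyz.1.1.2 ⟨hy, h⟩, hyz.1.2, hyz.2⟩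

theorem volume_ball_half (d : ℕ) (R : ℝ) :
    volume (ball (0 : Ed d) (R / 2)) =
      ENNReal.ofReal ((1 / 2) ^ d) * volume (ball (0 : Ed d) R) := by
  rw [show R / 2 = 1 / 2 * R by ring, Measure.addHaar_ball_mul_of_pos _ _ one_half_pos,
    finrank_euclideanSpace_fin]

theorem Rich.volume_le_mul_volume_ball_half {d : ℕ} {f : Ed d → ℂ} {τ R ε : ℝ} {x : Ed d}
    (hε : 0 ≤ ε) (h : Rich f τ R ((1 / 2) ^ d * ε) x) :
    volume {y : Ed d | y ∈ ball 0 R ∧ ¬ ‖f (x + y) - f x - f y‖ ≤ τ} ≤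
      ENNReal.ofReal ε * volume (ball (0 : Ed d) (R / 2)) := by
  rw [volume_ball_half, ← mul_assoc, ← ENNReal.ofReal_mul hε, mul_comm ε]
  exact ENNReal.le_ofReal_mul_of_toReal_le
    (measure_ne_top_of_subset (fun _ hy => hy.1) measure_ball_lt_top.ne) h

theorem volume_le_mul_volume_ball_half_sq {d : ℕ} {R ε : ℝ} {P : Set (Ed d × Ed d)}
    (hP : P ⊆ ball 0 R ×ˢ ball 0 R)
    (h : (volume P).toReal ≤ ((1 / 2) ^ d) ^ 2 * ε * (volume (ball (0 : Ed d) R)).toReal ^ 2) :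
    volume.prod volume P ≤
      ENNReal.ofReal ε * (volume (ball (0 : Ed d) (R / 2)) * volume (ball (0 : Ed d) (R / 2))) := by
  have hPfin : volume P ≠ ∞ := by
    refine measure_ne_top_of_subset hP ?_
    rw [Measure.volume_eq_prod, Measure.prod_prod]
    exact ENNReal.mul_ne_top measure_ball_lt_top.ne measure_ball_lt_top.ne
  rw [← ENNReal.toReal_pow] at h
  rw [← Measure.volume_eq_prod, volume_ball_half]
  refine (ENNReal.le_ofReal_mul_of_toReal_le hPfin h).trans_eq ?_
  rw [ENNReal.ofReal_mul (by positivity), ENNReal.ofReal_pow (by positivity)]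
  ring

theorem exists_small_defects {d : ℕ} {f : Ed d → ℂ} {R τ : ℝ} (hR : 0 < R)
    (hP : (volume {z : Ed d × Ed d | z.1 ∈ ball 0 R ∧ z.2 ∈ ball 0 R ∧
        τ < ‖f z.1 + f z.2 - f (z.1 + z.2)‖}).toReal ≤
      ((1 / 2) ^ d) ^ 2 * 16⁻¹ * ((volume (ball (0 : Ed d) R)).toReal) ^ 2)
    {x₁ x₂ x₃ x₄ : Ed d} (hx₁ : x₁ ∈ ball 0 (R / 8)) (hx₂ : x₂ ∈ ball 0 (R / 8))
    (hx₃ : x₃ ∈ ball 0 (R / 8)) (hx₄ : x₄ ∈ ball 0 (R / 8))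
    (hr₁ : Rich f τ R ((1 / 2) ^ d * 16⁻¹) x₁) (hr₂ : Rich f τ R ((1 / 2) ^ d * 16⁻¹) x₂)
    (hr₃ : Rich f τ R ((1 / 2) ^ d * 16⁻¹) x₃) (hr₄ : Rich f τ R ((1 / 2) ^ d * 16⁻¹) x₄) :
    ∃ y z : Ed d, ‖f (x₁ + y) - f x₁ - f y‖ ≤ τ ∧ ‖f (x₂ + y) - f x₂ - f y‖ ≤ τ ∧
      ‖f (x₃ + z) - f x₃ - f z‖ ≤ τ ∧ ‖f (x₄ + z) - f x₄ - f z‖ ≤ τ ∧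
      ‖f (x₁ + y) + f (x₃ + z) - f (x₁ + y + (x₃ + z))‖ ≤ τ ∧
      ‖f (x₂ + y) + f (x₄ + z) - f (x₂ + y + (x₄ + z))‖ ≤ τ := by
  have hε : 6 * ENNReal.ofReal 16⁻¹ < 1 := by
    rw [ENNReal.ofReal_inv_of_pos (by norm_num), ENNReal.ofReal_ofNat, ← div_eq_mul_inv,
      ENNReal.div_lt_iff (by norm_num) (by norm_num)]
    norm_num
  obtain ⟨y, hy, z, hz, hy₁, hy₂, hz₃, hz₄, hyz₁₃, hyz₂₄⟩ :=
    exists_pair_notMem_of_measure_le hε (measure_ball_pos _ _ (by positivity)).ne'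
      measure_ball_lt_top.ne
      (hr₁.volume_le_mul_volume_ball_half (by norm_num))
      (hr₂.volume_le_mul_volume_ball_half (by norm_num))
      (hr₃.volume_le_mul_volume_ball_half (by norm_num))
      (hr₄.volume_le_mul_volume_ball_half (by norm_num))
      (volume_le_mul_volume_ball_half_sq (fun z hz => ⟨hz.1, hz.2.1⟩) hP)
      x₁ x₂ x₃ x₄
  have hyR : y ∈ ball (0 : Ed d) R := ball_subset_ball (by linarith) hy
  have hzR : z ∈ ball (0 : Ed d) R := ball_subset_ball (by linarith) hz
  have hmem : ∀ x ∈ ball (0 : Ed d) (R / 8), ∀ w ∈ ball (0 : Ed d) (R / 2),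
      x + w ∈ ball (0 : Ed d) R := by
    intro x hx w hw
    rw [mem_ball_zero_iff] at hx hw ⊢
    linarith [norm_add_le x w]
  exact ⟨y, z, not_not.1 fun h => hy₁ ⟨hyR, h⟩, not_not.1 fun h => hy₂ ⟨hyR, h⟩,
    not_not.1 fun h => hz₃ ⟨hzR, h⟩, not_not.1 fun h => hz₄ ⟨hzR, h⟩,
    not_lt.1 fun h => hyz₁₃ ⟨hmem x₁ hx₁ y hy, hmem x₃ hx₃ z hz, h⟩,
    not_lt.1 fun h => hyz₂₄ ⟨hmem x₂ hx₂ y hy, hmem x₄ hx₄ z hz, h⟩⟩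

theorem rich_points_alternating_sum_general (d : ℕ) :
    ∃ C γ₀ δ₀ : ℝ, 0 < γ₀ ∧ 0 < δ₀ ∧
      ∀ R τ δ : ℝ, 0 < R → 0 < τ → 0 < δ → δ ≤ δ₀ → ∀ f : Ed d → ℂ, Measurable f →
        (volume {z : Ed d × Ed d | z.1 ∈ ball 0 R ∧ z.2 ∈ ball 0 R ∧
            τ < ‖f z.1 + f z.2 - f (z.1 + z.2)‖}).toReal <
          δ * ((volume (ball (0 : Ed d) R)).toReal)^2 →
        ∀ x₁ x₂ x₃ x₄ : Ed d,
          x₁ ∈ ball 0 (R/8) → x₂ ∈ ball 0 (R/8) → x₃ ∈ ball 0 (R/8) → x₄ ∈ ball 0 (R/8) →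
          Rich f τ R γ₀ x₁ → Rich f τ R γ₀ x₂ → Rich f τ R γ₀ x₃ → Rich f τ R γ₀ x₄ →
          x₁ - x₂ + x₃ - x₄ = 0 →
          ‖f x₁ - f x₂ + f x₃ - f x₄‖ < C * τ := by
  refine ⟨7, (1 / 2) ^ d * 16⁻¹, ((1 / 2) ^ d) ^ 2 * 16⁻¹, by positivity, by positivity, ?_⟩
  intro R τ δ hR hτ _ hδ f _ hP x₁ x₂ x₃ x₄ hx₁ hx₂ hx₃ hx₄ hr₁ hr₂ hr₃ hr₄ hx
  have hP' := hP.le.trans (mul_le_mul_of_nonneg_right hδ (sq_nonneg _))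
  obtain ⟨y, z, h₁, h₂, h₃, h₄, h₁₃, h₂₄⟩ :=
    exists_small_defects hR hP' hx₁ hx₂ hx₃ hx₄ hr₁ hr₂ hr₃ hr₄
  linarith [norm_alternating_sum_le_of_defects f hx y z h₁ h₂ h₃ h₄ h₁₃ h₂₄]

theorem rich_points_alternating_sum (d : ℕ) (hd : 1 ≤ d) :
    ∃ C γ₀ δ₀ : ℝ, 0 < γ₀ ∧ 0 < δ₀ ∧
      ∀ R τ δ : ℝ, 0 < R → 0 < τ → 0 < δ → δ ≤ δ₀ → ∀ f : Ed d → ℂ, Measurable f →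
        (volume {z : Ed d × Ed d | z.1 ∈ ball 0 R ∧ z.2 ∈ ball 0 R ∧
            τ < ‖f z.1 + f z.2 - f (z.1 + z.2)‖}).toReal <
          δ * ((volume (ball (0 : Ed d) R)).toReal)^2 →
        ∀ x₁ x₂ x₃ x₄ : Ed d,
          x₁ ∈ ball 0 (R/8) → x₂ ∈ ball 0 (R/8) → x₃ ∈ ball 0 (R/8) → x₄ ∈ ball 0 (R/8) →
          Rich f τ R γ₀ x₁ → Rich f τ R γ₀ x₂ → Rich f τ R γ₀ x₃ → Rich f τ R γ₀ x₄ →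
          x₁ - x₂ + x₃ - x₄ = 0 →
          ‖f x₁ - f x₂ + f x₃ - f x₄‖ < C * τ :=
  rich_points_alternating_sum_general d
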